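/- In the model with k source vertices s_1, …, s_k, each with its own stream of entering agents, for any execution of the dispersal rule in which no two agents settle at the same instant, the directed graph G(t) of settled agents and their marks is a forest at all times t, with each tree rooted at one of the sources. -/

import Mathlib

/-!
Model of Amir–Bruckstein "Fast Uniform Dispersion of a Crash-prone Swarm".

Agents are indexed by a type `A` (usually `ℕ`, agent `i` standing for `A_{i+1}`).
An execution is driven by an `EventOrder`: a sequence of events, each being the
activation or the deletion of a specified agent, at strictly increasing real times.
`cfg k` is the configuration before the `k`-th event.
-/

inductive AgentState (V : Type) where
  | outside : AgentState V
  | mobile (v : V) : AgentState V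
  | settled (v : V) (mark : Option V) : AgentState V
  | deleted : AgentState V

/-- The vertex occupied by an agent in a given state, if any. -/
def AgentState.pos {V : Type} : AgentState V → Option V
  | .outside => none
  | .mobile v => some v
  | .settled v _ => some v
  | .deleted => none

/-- A configuration: the state of each agent. -/
abbrev Config (A V : Type) := A → AgentState V

/-- Some settled agent occupies `v`. -/
def settledAt {A V : Type} (c : Config A V) (v : V) : Prop :=
  ∃ i m, c i = AgentState.settled v m

/-- Some mobile agent occupies `v`. -/
def mobileAt {A V : Type} (c : Config A V) (v : V) : Prop :=
  ∃ i, c i = AgentState.mobile v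

/-- The vertex `v` is empty. -/
def emptyAt {A V : Type} (c : Config A V) (v : V) : Prop :=
  ¬ settledAt c v ∧ ¬ mobileAt c v

/-- Vertex `u` contains exactly one agent: a settled agent marking `v`. -/
def soleSettledMarking {A V : Type} (c : Config A V) (u v : V) : Prop :=
  (∃ i, c i = AgentState.settled u (some v)) ∧ ¬ mobileAt c u

/-- A mobile agent at `v` has some vertex it could move to, per the local rule. -/
def canMoveFrom {A V : Type} (G : SimpleGraph V) (c : Config A V) (v : V) : Prop :=
  ∃ u, G.Adj v u ∧ (soleSettledMarking c u v ∨ emptyAt c u)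

/-- An outside agent `i` may enter the source `s`: all lower-indexed agents have
entered or been deleted, and `s` holds no mobile agent. -/
def canEnter {V : Type} (c : Config ℕ V) (s : V) (i : ℕ) : Prop :=
  (∀ j < i, c j ≠ AgentState.outside) ∧ ¬ mobileAt c s

/-- Each vertex holds at most one settled and at most one mobile agent. -/
def Capacity {A V : Type} (c : Config A V) : Prop :=
  (∀ v (i j : A) mi mj, c i = AgentState.settled v mi → c j = AgentState.settled v mj → i = j) ∧
  (∀ v (i j : A), c i = AgentState.mobile v → c j = AgentState.mobile v → i = j)

/-- An event: at `time`, the agent `agent` is activated (`isDel = false`) or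
activated-and-deleted (`isDel = true`). -/
structure Event where
  time : ℝ
  agent : ℕ
  isDel : Bool

/-- An event order: events at strictly increasing times, tending to infinity. -/
structure EventOrder where
  ev : ℕ → Event
  strict : StrictMono fun k => (ev k).time
  unbounded : Filter.Tendsto (fun k => (ev k).time) Filter.atTop Filter.atTop

/-- The legal outcomes `next` for the state of agent `i` when it is activated (and
not deleted) in configuration `c`, on environment `G` with source `s`.  This is
Algorithm 1 together with the entrance rule. -/
def ActOK {V : Type} (G : SimpleGraph V) (s : V) (c : Config ℕ V) (i : ℕ)
    (next : AgentState V) : Prop :=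
  match c i with
  | AgentState.outside =>
      (canEnter c s i ∧ emptyAt c s ∧ next = AgentState.settled s none) ∨
      (canEnter c s i ∧ ¬ emptyAt c s ∧ next = AgentState.mobile s) ∨
      (¬ canEnter c s i ∧ next = AgentState.outside)
  | AgentState.mobile v =>
      (∃ u, G.Adj v u ∧ soleSettledMarking c u v ∧ next = AgentState.mobile u) ∨
      ((¬ ∃ u, G.Adj v u ∧ soleSettledMarking c u v) ∧
        ∃ u, G.Adj v u ∧ emptyAt c u ∧ next = AgentState.settled u (some v)) ∨
      (¬ canMoveFrom G c v ∧ next = AgentState.mobile v)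
  | AgentState.settled v m => next = AgentState.settled v m
  | AgentState.deleted => next = AgentState.deleted

/-- Agent `i` attempts to move when activated in configuration `c`. -/
def AttemptsMove {V : Type} (G : SimpleGraph V) (s : V) (c : Config ℕ V) (i : ℕ) : Prop :=
  match c i with
  | AgentState.outside => canEnter c s i
  | AgentState.mobile v => canMoveFrom G c v
  | AgentState.settled _ _ => False
  | AgentState.deleted => False

/-- A simulation of an event order on the environment `G` with source `s`.
Deletions may occur at any scheduled deletion event (as is allowed when an event
order is simulated on an environment other than the one it arose from). -/
structure Exec (V : Type) (G : SimpleGraph V) (s : V) where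
  S : EventOrder
  cfg : ℕ → Config ℕ V
  init : ∀ i, cfg 0 i = AgentState.outside
  cap : ∀ k, Capacity (cfg k)
  frozen : ∀ k j, j ≠ (S.ev k).agent → cfg (k + 1) j = cfg k j
  act : ∀ k, (S.ev k).isDel = false →
    ActOK G s (cfg k) (S.ev k).agent (cfg (k + 1) (S.ev k).agent)
  del : ∀ k, (S.ev k).isDel = true → cfg (k + 1) (S.ev k).agent = AgentState.deleted

/-- An execution that could arise on the environment `G` itself: agents are
deleted only when activated and attempting to move. -/
structure ExecG (V : Type) (G : SimpleGraph V) (s : V) extends Exec V G s where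
  delLegal : ∀ k, (S.ev k).isDel = true → AttemptsMove G s (cfg k) (S.ev k).agent

/-- Agent `i` performs a successful move at step `k` (entering the source counts). -/
def movedAt {V : Type} {G : SimpleGraph V} {s : V} (E : Exec V G s) (i k : ℕ) : Prop :=
  ∃ v : V, (E.cfg (k + 1) i).pos = some v ∧ (E.cfg k i).pos ≠ some v

/-- The depth of agent `i` at step `k`: the number of successful moves made before `k`. -/
noncomputable def depth {V : Type} {G : SimpleGraph V} {s : V} (E : Exec V G s)
    (i k : ℕ) : ℕ :=
  Set.ncard {j | j < k ∧ movedAt E i j}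

/-- Slow vertices, relative to a parent function `par` describing the tree.
A vertex becomes slow when a mobile agent on it is activated and finds no vertex
it can move to, while all its descendants in the tree are already slow;
slowness persists forever. -/
inductive SlowVtx {V : Type} (G : SimpleGraph V) (s : V) (par : V → Option V)
    (E : Exec V G s) : ℕ → V → Prop
  | trigger (k : ℕ) (v : V) :
      (E.S.ev k).isDel = false →
      E.cfg k ((E.S.ev k).agent) = AgentState.mobile v →
      ¬ canMoveFrom G (E.cfg k) v →
      (∀ u, par u = some v → SlowVtx G s par E k u) →
      SlowVtx G s par E (k + 1) v
  | persist (k : ℕ) (v : V) : SlowVtx G s par E k v → SlowVtx G s par E (k + 1) v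

/-- Iterated parent map. -/
def parIter {V : Type} (par : V → Option V) : ℕ → V → Option V
  | 0, v => some v
  | m + 1, v => (par v).bind (parIter par m)

/-- A spanning tree of `G` rooted at `s`, given by a parent function. -/
structure SpanningTreeOn (V : Type) (G : SimpleGraph V) (s : V) where
  par : V → Option V
  root_iff : ∀ v, par v = none ↔ v = s
  adj : ∀ v u, par v = some u → G.Adj v u
  reach : ∀ v, ∃ m, parIter par m v = some s

/-- The marks of settled agents follow the tree `T` (so `G(t) ⊆ T` at all times). -/
def MarksFollow {V : Type} {G : SimpleGraph V} {s : V} (E : Exec V G s)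
    (T : SpanningTreeOn V G s) : Prop :=
  ∀ k i v m, E.cfg k i = AgentState.settled v m → T.par v = m

/-- Agents traverse only edges of the tree `T`, moving from parent to child
(entering the environment only at the root `s`). -/
def MovesOnTree {V : Type} {G : SimpleGraph V} {s : V} (E : Exec V G s)
    (T : SpanningTreeOn V G s) : Prop :=
  ∀ k i u, (E.cfg k i).pos ≠ some u → (E.cfg (k + 1) i).pos = some u →
    (u = s ∧ E.cfg k i = AgentState.outside) ∨
    (∃ v, (E.cfg k i).pos = some v ∧ T.par u = some v)

/-- Agent `i` is slow at step `k` (it occupies a slow vertex). -/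
def AgentSlow {V : Type} {G : SimpleGraph V} {s : V} (par : V → Option V)
    (E : Exec V G s) (k i : ℕ) : Prop :=
  ∃ v, (E.cfg k i).pos = some v ∧ SlowVtx G s par E k v

/-- Agent `i` is settled at step `k`. -/
def AgentSettled {V : Type} {G : SimpleGraph V} {s : V} (E : Exec V G s) (k i : ℕ) : Prop :=
  ∃ v m, E.cfg k i = AgentState.settled v m

/-- Parent function of the path graph `P(n)`: `v_0` is the root and the parent of
`v_{i+1}` is `v_i`. -/
def pathPar (n : ℕ) : Fin n → Option (Fin n) := fun v =>
  if _ : (v : ℕ) = 0 then none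
  else some ⟨(v : ℕ) - 1, lt_of_le_of_lt (Nat.sub_le _ _) v.isLt⟩

/-- The one-sided infinite path `P(∞)` on `ℕ`. -/
def pathInf : SimpleGraph ℕ := SimpleGraph.fromRel (fun a b => b = a + 1)

/-- Parent function of `P(∞)`, rooted at `0`. -/
def pathInfPar : ℕ → Option ℕ := fun v => if v = 0 then none else some (v - 1)

/-- The meaningful event times of an event order: `idx m` is the index of the
event `t_m`, the first event after `t_{m-1}` at which one of the agents
`A_1, …, A_{m+1}` (indices `0, …, m`) acts. -/
structure MeaningfulTimes (S : EventOrder) where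
  idx : ℕ → ℕ
  mono : StrictMono idx
  agent_le : ∀ m, (S.ev (idx m)).agent ≤ m
  first0 : ∀ k < idx 0, (S.ev k).agent ≠ 0
  least : ∀ m k, idx m < k → k < idx (m + 1) → ¬ ((S.ev k).agent ≤ m + 1)

/-- The directed graph of settled agents and their marks is a tree rooted at `s`:
`s` is settled; an agent has no mark exactly when it sits at `s`; marks point along
edges of `G` to settled vertices; and every settled vertex reaches `s` by a chain
of marks. -/
def IsMarkTree {V : Type} (G : SimpleGraph V) (s : V) (c : Config ℕ V) : Prop :=
  settledAt c s ∧
  (∀ i v m, c i = AgentState.settled v m → (m = none ↔ v = s)) ∧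
  (∀ i v u, c i = AgentState.settled v (some u) → G.Adj v u ∧ settledAt c u) ∧
  (∀ v, settledAt c v →
    ∃ (m : ℕ) (f : ℕ → V), f 0 = v ∧ f m = s ∧
      ∀ j < m, ∃ i, c i = AgentState.settled (f j) (some (f (j + 1))))

/-- The first step (as an extended natural) at which a predicate holds. -/
noncomputable def firstStep (P : ℕ → Prop) : ℕ∞ :=
  sInf {m : ℕ∞ | ∃ k : ℕ, m = (k : ℕ∞) ∧ P k}

/-- The number of events of `S` occurring before (real) time `t`; since event times
are strictly increasing, the configuration at time `t` is `cfg (stepsBefore S t)`. -/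
noncomputable def stepsBefore (S : EventOrder) (t : ℝ) : ℕ :=
  Set.ncard {k | (S.ev k).time < t}

/-- Statement (a): every non-deleted agent whose copy in `G` is neither slow nor
settled has depth in `G` at least its depth in `P(n)`. -/
def StmtA {V : Type} {G : SimpleGraph V} {s : V} (n : ℕ) (hn : 0 < n)
    (EG : Exec V G s) (TG : SpanningTreeOn V G s)
    (EP : Exec (Fin n) (SimpleGraph.pathGraph n) ⟨0, hn⟩) (k : ℕ) : Prop :=
  ∀ i, EG.cfg k i ≠ AgentState.deleted →
    ¬ (AgentSlow TG.par EG k i ∨ AgentSettled EG k i) →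
    depth EP i k ≤ depth EG i k

/-- Statement (b): for every non-deleted agent, if its copy in `P(n)` is slow or
settled then its copy in `G` is slow or settled, and its depth in `G` is at most
its depth in `P(n)`. -/
def StmtB {V : Type} {G : SimpleGraph V} {s : V} (n : ℕ) (hn : 0 < n)
    (EG : Exec V G s) (TG : SpanningTreeOn V G s)
    (EP : Exec (Fin n) (SimpleGraph.pathGraph n) ⟨0, hn⟩) (k : ℕ) : Prop :=
  ∀ i, EG.cfg k i ≠ AgentState.deleted →
    (AgentSlow (pathPar n) EP k i ∨ AgentSettled EP k i) →
    ((AgentSlow TG.par EG k i ∨ AgentSettled EG k i) ∧ depth EG i k ≤ depth EP i k)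

/-! Multi-source model: `K` source vertices `σ 0, …, σ (K-1)`, each with its own
stream of agents; agent `(j, m)` is the `(m+1)`-st agent of the stream of source
`σ j`. -/

/-- Entrance rule with several sources: agent `(j, m)` may enter its source `σ j`
when all lower-indexed agents of its own stream have entered or been deleted and
`σ j` holds no mobile agent. -/
def mCanEnter {K : ℕ} {V : Type} (σ : Fin K → V) (c : Config (Fin K × ℕ) V)
    (a : Fin K × ℕ) : Prop :=
  (∀ m' < a.2, c (a.1, m') ≠ AgentState.outside) ∧ ¬ mobileAt c (σ a.1)

/-- Legal outcomes of activating agent `a` in the multi-source model. -/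
def MActOK {K : ℕ} {V : Type} (G : SimpleGraph V) (σ : Fin K → V)
    (c : Config (Fin K × ℕ) V) (a : Fin K × ℕ) (next : AgentState V) : Prop :=
  match c a with
  | AgentState.outside =>
      (mCanEnter σ c a ∧ emptyAt c (σ a.1) ∧ next = AgentState.settled (σ a.1) none) ∨
      (mCanEnter σ c a ∧ ¬ emptyAt c (σ a.1) ∧ next = AgentState.mobile (σ a.1)) ∨
      (¬ mCanEnter σ c a ∧ next = AgentState.outside)
  | AgentState.mobile v =>
      (∃ u, G.Adj v u ∧ soleSettledMarking c u v ∧ next = AgentState.mobile u) ∨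
      ((¬ ∃ u, G.Adj v u ∧ soleSettledMarking c u v) ∧
        ∃ u, G.Adj v u ∧ emptyAt c u ∧ next = AgentState.settled u (some v)) ∨
      (¬ canMoveFrom G c v ∧ next = AgentState.mobile v)
  | AgentState.settled v mk => next = AgentState.settled v mk
  | AgentState.deleted => next = AgentState.deleted

/-- Agent `a` attempts to move when activated (multi-source model). -/
def MAttemptsMove {K : ℕ} {V : Type} (G : SimpleGraph V) (σ : Fin K → V)
    (c : Config (Fin K × ℕ) V) (a : Fin K × ℕ) : Prop :=
  match c a with
  | AgentState.outside => mCanEnter σ c a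
  | AgentState.mobile v => canMoveFrom G c v
  | AgentState.settled _ _ => False
  | AgentState.deleted => False

structure MEvent (K : ℕ) where
  time : ℝ
  agent : Fin K × ℕ
  isDel : Bool

structure MEventOrder (K : ℕ) where
  ev : ℕ → MEvent K
  strict : StrictMono fun k => (ev k).time

/-- An execution of the dispersal rule on `G` with source vertices `σ`; agents
are deleted only when they attempt to move (so no two agents settle at the same
instant — events are sequential at distinct times). -/
structure MExec (K : ℕ) (V : Type) (G : SimpleGraph V) (σ : Fin K → V) where
  S : MEventOrder K
  cfg : ℕ → Config (Fin K × ℕ) V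
  init : ∀ a, cfg 0 a = AgentState.outside
  cap : ∀ k, Capacity (cfg k)
  frozen : ∀ k a, a ≠ (S.ev k).agent → cfg (k + 1) a = cfg k a
  act : ∀ k, (S.ev k).isDel = false →
    MActOK G σ (cfg k) (S.ev k).agent (cfg (k + 1) (S.ev k).agent)
  del : ∀ k, (S.ev k).isDel = true → cfg (k + 1) (S.ev k).agent = AgentState.deleted
  delLegal : ∀ k, (S.ev k).isDel = true → MAttemptsMove G σ (cfg k) (S.ev k).agent

/-- The directed graph of settled agents and their marks is a forest, each tree
rooted at one of the sources: settled agents without a mark sit at sources; marks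
point along edges of `G` to settled vertices; and every settled vertex reaches,
by a chain of marks, a source holding a settled agent with no mark (its root). -/
def IsMarkForest {K : ℕ} {V : Type} (G : SimpleGraph V) (σ : Fin K → V)
    (c : Config (Fin K × ℕ) V) : Prop :=
  (∀ i v, c i = AgentState.settled v none → ∃ j, v = σ j) ∧
  (∀ i v u, c i = AgentState.settled v (some u) → G.Adj v u ∧ settledAt c u) ∧
  (∀ v, settledAt c v →
    ∃ (m : ℕ) (f : ℕ → V) (j : Fin K), f 0 = v ∧ f m = σ j ∧
      (∃ i, c i = AgentState.settled (σ j) none) ∧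
      ∀ l < m, ∃ i, c i = AgentState.settled (f l) (some (f (l + 1))))

/-!
Settled agents never change state, so the marks present at one time persist. A newly settled
agent is either an unmarked agent at its own source, hence a new root, or marks the vertex it came
from; that vertex holds a settled agent because a mobile agent only ever stands on, or moves to, a
vertex with a settled agent. So the forest property together with this last fact is preserved by
every step.
-/

section MarkForest

variable {K : ℕ} {V : Type} {G : SimpleGraph V} {σ : Fin K → V} {c c' : Config (Fin K × ℕ) V}

def ReachesRoot (σ : Fin K → V) (c : Config (Fin K × ℕ) V) (v : V) : Prop :=
  ∃ (m : ℕ) (f : ℕ → V) (j : Fin K), f 0 = v ∧ f m = σ j ∧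
    (∃ i, c i = AgentState.settled (σ j) none) ∧
    ∀ l < m, ∃ i, c i = AgentState.settled (f l) (some (f (l + 1)))

def SettledPersists (c c' : Config (Fin K × ℕ) V) : Prop :=
  ∀ a v m, c a = AgentState.settled v m → c' a = AgentState.settled v m

theorem SettledPersists.settledAt (h : SettledPersists c c') {v : V} (hv : settledAt c v) :
    settledAt c' v :=
  let ⟨a, m, ha⟩ := hv
  ⟨a, m, h a v m ha⟩

theorem ReachesRoot.of_settledPersists (h : SettledPersists c c') {v : V}
    (hv : ReachesRoot σ c v) : ReachesRoot σ c' v :=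
  let ⟨m, f, j, h0, hm, ⟨a, ha⟩, hchain⟩ := hv
  ⟨m, f, j, h0, hm, ⟨a, h _ _ _ ha⟩, fun l hl => (hchain l hl).imp fun _ hb => h _ _ _ hb⟩

theorem reachesRoot_source {j : Fin K} (h : ∃ a, c a = AgentState.settled (σ j) none) :
    ReachesRoot σ c (σ j) :=
  ⟨0, fun _ => σ j, j, rfl, rfl, h, fun _ hl => absurd hl (Nat.not_lt_zero _)⟩

theorem ReachesRoot.cons {u v : V} (hu : ∃ a, c a = AgentState.settled u (some v))
    (hv : ReachesRoot σ c v) : ReachesRoot σ c u := by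
  obtain ⟨m, f, j, h0, hm, hroot, hchain⟩ := hv
  refine ⟨m + 1, fun | 0 => u | l + 1 => f l, j, rfl, hm, hroot, ?_⟩
  rintro (_ | l) hl
  · rw [← h0] at hu; exact hu
  · exact hchain l (by omega)

def MarkForestInvariant (G : SimpleGraph V) (σ : Fin K → V) (c : Config (Fin K × ℕ) V) : Prop :=
  IsMarkForest G σ c ∧ ∀ v, mobileAt c v → settledAt c v

/-- The new states an agent may take in one step, with only what the invariant needs to know. -/
def AgentStep (G : SimpleGraph V) (σ : Fin K → V) (c : Config (Fin K × ℕ) V) (a : Fin K × ℕ)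
    (y : AgentState V) : Prop :=
  y = c a ∨ y = AgentState.deleted ∨ (∃ v, y = AgentState.mobile v ∧ settledAt c v) ∨
    y = AgentState.settled (σ a.1) none ∨
    ∃ u v, y = AgentState.settled u (some v) ∧ G.Adj u v ∧ settledAt c v

theorem markForestInvariant_of_forall_outside (h : ∀ a, c a = AgentState.outside) :
    MarkForestInvariant G σ c := by
  refine ⟨⟨fun a _ ha => ?_, fun a _ _ ha => ?_, fun _ ⟨a, _, ha⟩ => ?_⟩, fun _ ⟨a, ha⟩ => ?_⟩ <;>
    simp [h a] at ha

theorem MarkForestInvariant.step (hc : MarkForestInvariant G σ c) (hpers : SettledPersists c c')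
    (hstep : ∀ a, AgentStep G σ c a (c' a)) : MarkForestInvariant G σ c' := by
  obtain ⟨⟨hroot, hmark, hreach⟩, hmob⟩ := hc
  refine ⟨⟨fun a v h => ?_, fun a v u h => ?_, fun v ⟨a, m, h⟩ => ?_⟩, fun v ⟨a, h⟩ => ?_⟩
  · rcases hstep a with hy | hy | ⟨w, hy, -⟩ | hy | ⟨u, w, hy, -⟩ <;> rw [hy] at h
    · exact hroot a v h
    all_goals simp only [reduceCtorEq, AgentState.settled.injEq, and_false] at h
    exact ⟨a.1, h.1.symm⟩
  · rcases hstep a with hy | hy | ⟨w, hy, -⟩ | hy | ⟨u', w, hy, hadj, hw⟩ <;> rw [hy] at h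
    · exact (hmark a v u h).imp_right hpers.settledAt
    all_goals simp only [reduceCtorEq, AgentState.settled.injEq, Option.some.injEq, and_false] at h
    obtain ⟨rfl, rfl⟩ := h
    exact ⟨hadj, hpers.settledAt hw⟩
  · rcases hstep a with hy | hy | ⟨w, hy, -⟩ | hy | ⟨u, w, hy, -, hw⟩ <;> rw [hy] at h
    · exact ReachesRoot.of_settledPersists hpers (hreach v ⟨a, m, h⟩)
    all_goals simp only [reduceCtorEq, AgentState.settled.injEq] at h
    · rw [← h.1]
      exact reachesRoot_source ⟨a, hy⟩
    · rw [← h.1]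
      exact (ReachesRoot.of_settledPersists hpers (hreach w hw)).cons ⟨a, hy⟩
  · rcases hstep a with hy | hy | ⟨w, hy, hw⟩ | hy | ⟨u, w, hy, -⟩ <;> rw [hy] at h
    · exact hpers.settledAt (hmob v ⟨a, h⟩)
    all_goals simp only [reduceCtorEq, AgentState.mobile.injEq] at h
    exact h ▸ hpers.settledAt hw

theorem agentStep_of_mActOK (hmob : ∀ v, mobileAt c v → settledAt c v) {a : Fin K × ℕ}
    {y : AgentState V} (h : MActOK G σ c a y) : AgentStep G σ c a y := by
  unfold MActOK at h
  split at h
  case _ hout =>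
    rcases h with ⟨-, -, h⟩ | ⟨⟨-, hnm⟩, hne, h⟩ | ⟨-, h⟩
    · exact Or.inr (Or.inr (Or.inr (Or.inl h)))
    · refine Or.inr (Or.inr (Or.inl ⟨σ a.1, h, ?_⟩))
      by_contra hns
      exact hne ⟨hns, hnm⟩
    · exact Or.inl (h.trans hout.symm)
  case _ v hv =>
    rcases h with ⟨u, -, ⟨⟨i, hi⟩, -⟩, h⟩ | ⟨-, u, hadj, -, h⟩ | ⟨-, h⟩
    · exact Or.inr (Or.inr (Or.inl ⟨u, h, i, some v, hi⟩))
    · exact Or.inr (Or.inr (Or.inr (Or.inr ⟨u, v, h, hadj.symm, hmob v ⟨a, hv⟩⟩)))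
    · exact Or.inl (h.trans hv.symm)
  case _ hs => exact Or.inl (h.trans hs.symm)
  case _ hd => exact Or.inl (h.trans hd.symm)

end MarkForest

namespace MExec

variable {K : ℕ} {V : Type} {G : SimpleGraph V} {σ : Fin K → V} (E : MExec K V G σ)

theorem settledPersists (k : ℕ) : SettledPersists (E.cfg k) (E.cfg (k + 1)) := by
  intro a v m h
  by_cases ha : a = (E.S.ev k).agent
  · subst ha
    cases hdel : (E.S.ev k).isDel with
    | false =>
      have hact := E.act k hdel
      unfold MActOK at hact
      rwa [h] at hact
    | true =>
      have hmove := E.delLegal k hdel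
      unfold MAttemptsMove at hmove
      rw [h] at hmove
      exact hmove.elim
  · rw [E.frozen k a ha, h]

theorem agentStep (k : ℕ) (hmob : ∀ v, mobileAt (E.cfg k) v → settledAt (E.cfg k) v)
    (a : Fin K × ℕ) : AgentStep G σ (E.cfg k) a (E.cfg (k + 1) a) := by
  by_cases ha : a = (E.S.ev k).agent
  · subst ha
    cases hdel : (E.S.ev k).isDel with
    | false => exact agentStep_of_mActOK hmob (E.act k hdel)
    | true => exact Or.inr (Or.inl (E.del k hdel))
  · exact Or.inl (E.frozen k a ha)

theorem markForestInvariant (k : ℕ) : MarkForestInvariant G σ (E.cfg k) := by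
  induction k with
  | zero => exact markForestInvariant_of_forall_outside E.init
  | succ k ih => exact ih.step (E.settledPersists k) (E.agentStep k ih.2)

end MExec

theorem stmt17_general {V : Type} (G : SimpleGraph V) (K : ℕ) (σ : Fin K → V) (E : MExec K V G σ) (k : ℕ) :
    IsMarkForest G σ (E.cfg k) :=
  (E.markForestInvariant k).1

/-- In the model with `K` source vertices, each with its own
stream of entering agents, for any execution of the dispersal rule (events are
sequential, so no two agents settle at the same instant) the directed graph
`G(t)` of settled agents and their marks is a forest at all times, with each tree
rooted at one of the sources. -/
theorem stmt17 {V : Type} [Fintype V] (G : SimpleGraph V) (hG : G.Connected)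
    (K : ℕ) (σ : Fin K → V) (E : MExec K V G σ) (k : ℕ) :
    IsMarkForest G σ (E.cfg k) :=
  stmt17_general G K σ E k
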